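/- arXiv:1910.01807 — 7 statements merged into one kernel-verified Lean document; each statement's English description precedes it below -/
import Mathlib

section
/- Let ℓ ≥ 3, let G be a finite connected graph with at least two vertices and diameter at least ℓ, and let H be a finite graph. Then the lexicographic product G[H] is ℓ-distance-balanced if and only if G is ℓ-distance-balanced. -/
open SimpleGraph

/-- The set of vertices of `G` strictly closer to `u` than to `v`. -/
def closerSet {V : Type*} (G : SimpleGraph V) (u v : V) : Set V :=
  {x | G.dist x u < G.dist x v}

/-- `G` is `ℓ`-distance-balanced: for every pair of vertices at distance `ℓ`, the number of
vertices strictly closer to the first equals the number strictly closer to the second. -/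
def IsDistBalanced {V : Type*} (G : SimpleGraph V) (ℓ : ℕ) : Prop :=
  ∀ u v : V, G.dist u v = ℓ → (closerSet G u v).ncard = (closerSet G v u).ncard

/-- The lexicographic product `G[H]`. -/
def lexProd {α β : Type*} (G : SimpleGraph α) (H : SimpleGraph β) :
    SimpleGraph (α × β) where
  Adj x y := G.Adj x.1 y.1 ∨ (x.1 = y.1 ∧ H.Adj x.2 y.2)
  symm := ⟨by
    rintro x y (h | ⟨e, h⟩)
    · exact Or.inl h.symm
    · exact Or.inr ⟨e.symm, h.symm⟩⟩
  loopless := ⟨by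
    rintro x (h | ⟨_, h⟩)
    · exact G.irrefl h
    · exact H.irrefl h⟩

/-!
Two vertices of `G[H]` with different first coordinates are at the same distance as their
projections in `G`, while two vertices in a common fibre `{a} × V(H)` are at distance at most `2`
(go to a neighbour of `a` and back). Hence, for a pair `u, v` at distance `ℓ ≥ 3`, a vertex of
`G[H]` is closer to `u` than to `v` exactly when its projection is closer to `u.1` than to `v.1`:
the closer sets of `G[H]` are the closer sets of `G` times `V(H)`, and balance transfers in both
directions after dividing by `|V(H)|`.
-/

namespace SimpleGraph

variable {α β : Type*} {G : SimpleGraph α} {H : SimpleGraph β}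

variable (G H) in
def toLexProd (b : β) : G →g lexProd G H :=
  ⟨fun a => (a, b), Or.inl⟩

theorem Walk.edist_fst_le_length {x y : α × β} (p : (lexProd G H).Walk x y) :
    G.edist x.1 y.1 ≤ p.length := by
  induction p with
  | nil => simp
  | @cons x y z hxy _ ih =>
    have hstep : G.edist x.1 y.1 ≤ 1 := by
      rcases hxy with hadj | ⟨heq, _⟩
      · exact (edist_eq_one_iff_adj.mpr hadj).le
      · simp [heq]
    calc G.edist x.1 z.1 ≤ G.edist x.1 y.1 + G.edist y.1 z.1 := G.edist_triangle
      _ ≤ 1 + _ := add_le_add hstep ih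
      _ = _ := by push_cast [Walk.length_cons]; ring

theorem Walk.exists_lexProd_walk {a c : α} (p : G.Walk a c) (hp : ¬p.Nil) (b d : β) :
    ∃ q : (lexProd G H).Walk (a, b) (c, d), q.length = p.length := by
  cases p with
  | nil => exact absurd .nil hp
  | cons hadj p => exact ⟨.cons (show (lexProd G H).Adj (a, b) (_, d) from Or.inl hadj)
      (p.map (toLexProd G H d)), congrArg Nat.succ (p.length_map _)⟩

theorem lexProd_dist_of_fst_ne (hG : G.Preconnected) {a c : α} (hne : a ≠ c) (b d : β) :
    (lexProd G H).dist (a, b) (c, d) = G.dist a c := by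
  obtain ⟨p, hp⟩ := (hG a c).exists_walk_length_eq_dist
  obtain ⟨q, hq⟩ := p.exists_lexProd_walk (H := H) (p.not_nil_of_ne hne) b d
  have hreach : (lexProd G H).Reachable (a, b) (c, d) := ⟨q⟩
  obtain ⟨r, hr⟩ := hreach.exists_walk_length_eq_dist
  have hle : (lexProd G H).dist (a, b) (c, d) ≤ G.dist a c := hp ▸ hq ▸ dist_le q
  have hge : G.dist a c ≤ (lexProd G H).dist (a, b) (c, d) := by
    have := r.edist_fst_le_length
    rw [← (hG a c).coe_dist_eq_edist, hr] at this
    exact_mod_cast this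
  omega

theorem lexProd_dist_le_two [Nontrivial α] (hG : G.Preconnected) (a : α) (b d : β) :
    (lexProd G H).dist (a, b) (a, d) ≤ 2 := by
  obtain ⟨c, hc⟩ := hG.exists_adj_of_nontrivial a
  exact dist_le (.cons (v := (c, b)) (Or.inl hc) (.cons (Or.inl hc.symm) .nil) :
    (lexProd G H).Walk (a, b) (a, d))

theorem fst_ne_of_two_lt_lexProd_dist [Nontrivial α] (hG : G.Preconnected) {u v : α × β}
    (h : 2 < (lexProd G H).dist u v) : u.1 ≠ v.1 := by
  obtain ⟨u₁, u₂⟩ := u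
  obtain ⟨v₁, v₂⟩ := v
  rintro (rfl : u₁ = v₁)
  have := lexProd_dist_le_two (H := H) hG u₁ u₂ v₂
  omega

theorem lexProd_closerSet [Nontrivial α] (hG : G.Preconnected) {u v : α × β}
    (h : 3 ≤ G.dist u.1 v.1) :
    closerSet (lexProd G H) u v = closerSet G u.1 v.1 ×ˢ Set.univ := by
  obtain ⟨u₁, u₂⟩ := u
  obtain ⟨v₁, v₂⟩ := v
  simp only at h
  have hne : u₁ ≠ v₁ := by rintro rfl; simp at h
  ext ⟨a, b⟩
  simp only [closerSet, Set.mem_ofPred_eq, Set.mem_prod, Set.mem_univ, and_true]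
  by_cases hau : a = u₁
  · subst hau
    have := lexProd_dist_le_two (H := H) hG a b u₂
    rw [lexProd_dist_of_fst_ne hG hne, dist_self]
    omega
  by_cases hav : a = v₁
  · subst hav
    have := lexProd_dist_le_two (H := H) hG a b v₂
    rw [lexProd_dist_of_fst_ne hG hne.symm, dist_self, SimpleGraph.dist_comm]
    omega
  rw [lexProd_dist_of_fst_ne hG hau, lexProd_dist_of_fst_ne hG hav]

theorem ncard_closerSet_lexProd [Nontrivial α] (hG : G.Preconnected) {u v : α × β}
    (h : 3 ≤ G.dist u.1 v.1) :
    (closerSet (lexProd G H) u v).ncard = (closerSet G u.1 v.1).ncard * Nat.card β := by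
  rw [lexProd_closerSet hG h, Set.ncard_prod, Set.ncard_univ]

end SimpleGraph

theorem stmt1_general {α β : Type*} [Fintype α] [Fintype β] [Nonempty β]
    (G : SimpleGraph α) (H : SimpleGraph β) (hG : G.Connected)
    (hcard : 2 ≤ Fintype.card α) (ℓ : ℕ) (hℓ : 3 ≤ ℓ) :
    IsDistBalanced (lexProd G H) ℓ ↔ IsDistBalanced G ℓ := by
  have : Nontrivial α := Fintype.one_lt_card_iff_nontrivial.mp hcard
  have hG := hG.preconnected
  constructor
  · intro hbal u v huv
    obtain ⟨b⟩ := ‹Nonempty β›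
    have hne : u ≠ v := by rintro rfl; simp at huv; omega
    have key := hbal (u, b) (v, b) (by rw [lexProd_dist_of_fst_ne hG hne, huv])
    rwa [ncard_closerSet_lexProd hG (u := (u, b)) (v := (v, b)) (by simp [huv, hℓ]),
      ncard_closerSet_lexProd hG (u := (v, b)) (v := (u, b))
        (by simp [SimpleGraph.dist_comm, huv, hℓ]),
      Nat.mul_left_inj Nat.card_pos.ne'] at key
  · intro hbal u v huv
    have hne : u.1 ≠ v.1 := fst_ne_of_two_lt_lexProd_dist (H := H) hG (by omega)
    have hdG : G.dist u.1 v.1 = ℓ := by rw [← huv, ← lexProd_dist_of_fst_ne hG hne]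
    rw [ncard_closerSet_lexProd hG (by omega),
      ncard_closerSet_lexProd hG (by rw [SimpleGraph.dist_comm]; omega), hbal _ _ hdG]

theorem stmt1 {α β : Type*} [Fintype α] [Fintype β] [Nonempty β]
    (G : SimpleGraph α) (H : SimpleGraph β) (hG : G.Connected)
    (hcard : 2 ≤ Fintype.card α) (ℓ : ℕ) (hℓ : 3 ≤ ℓ) (hdiam : ℓ ≤ G.diam) :
    IsDistBalanced (lexProd G H) ℓ ↔ IsDistBalanced G ℓ :=
  stmt1_general G H hG hcard ℓ hℓ
end

section
/- Let H be a finite graph with |V(H)| ≥ 2 and let G be a finite connected graph. Then the corona product G∘H is 2-distance-balanced if and only if G ≅ K₁ and H is locally regular (any two non-adjacent vertices of H have the same degree). -/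
open SimpleGraph

/-- The corona product `G ∘ H`: vertices `(g, none)` form the copy of `G`, and for each `g`
the vertices `(g, some h)` form the `g`-th copy of `H`, joined completely to `(g, none)`. -/
def corona {α β : Type*} (G : SimpleGraph α) (H : SimpleGraph β) :
    SimpleGraph (α × Option β) where
  Adj x y :=
    (x.2 = none ∧ y.2 = none ∧ G.Adj x.1 y.1) ∨
    (x.1 = y.1 ∧ x.2 = none ∧ y.2 ≠ none) ∨
    (x.1 = y.1 ∧ x.2 ≠ none ∧ y.2 = none) ∨
    (x.1 = y.1 ∧ ∃ h₁ h₂, x.2 = some h₁ ∧ y.2 = some h₂ ∧ H.Adj h₁ h₂)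
  symm := by
    refine ⟨?_⟩
    rintro x y (⟨h1, h2, h3⟩ | ⟨h1, h2, h3⟩ | ⟨h1, h2, h3⟩ | ⟨h1, h₁, h₂, e1, e2, ha⟩)
    · exact Or.inl ⟨h2, h1, h3.symm⟩
    · exact Or.inr (Or.inr (Or.inl ⟨h1.symm, h3, h2⟩))
    · exact Or.inr (Or.inl ⟨h1.symm, h3, h2⟩)
    · exact Or.inr (Or.inr (Or.inr ⟨h1.symm, h₂, h₁, e2, e1, ha.symm⟩))
  loopless := by
    refine ⟨?_⟩
    rintro x (⟨_, _, h⟩ | ⟨_, h1, h2⟩ | ⟨_, h1, h2⟩ | ⟨_, h₁, h₂, e1, e2, ha⟩)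
    · exact G.irrefl h
    · exact h2 h1
    · exact h1 h2
    · rw [e1] at e2; injection e2 with e; exact H.irrefl (e ▸ ha)

/-!
If `G` is a single vertex, `G ∘ H` is the cone over `H`, of diameter at most 2. In a connected
graph of diameter at most 2, the vertices strictly closer to `u` than to a non-neighbour `v ≠ u`
are `u` and `N(u) \ N(v)`, so being 2-distance-balanced says `|N(u)| = |N(v)|` for all such
pairs; in the cone only the pairs inside `H` qualify, and each neighbourhood gains just the apex.

If `G` has an edge `g₁g₂`, the vertex `(g₁, none)` separates the `g₁`-th copy of `H` from the
rest of the corona. Hence for `u = (g₁, some h₀)` and `v = (g₂, none)`, at distance 2, every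
vertex closer to `u` lies in the `g₁`-th copy, at most `|V(H)|` vertices, while `v` and the
whole `g₂`-th copy, `|V(H)| + 1` vertices, are closer to `v`.
-/

namespace SimpleGraph

variable {V : Type*} {G : SimpleGraph V}

def IsLocallyRegular (G : SimpleGraph V) : Prop :=
  ∀ u v, u ≠ v → ¬G.Adj u v → (G.neighborSet u).ncard = (G.neighborSet v).ncard

open Classical in
lemma Connected.dist_eq_ite_of_dist_le_two (hG : G.Connected) (hdiam : ∀ u v, G.dist u v ≤ 2)
    (u v : V) : G.dist u v = if u = v then 0 else if G.Adj u v then 1 else 2 := by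
  have := hdiam u v
  split_ifs with huv hadj
  · exact huv ▸ dist_self
  · exact dist_eq_one_iff_adj.mpr hadj
  · have h0 : G.dist u v ≠ 0 := fun h => huv (hG.dist_eq_zero_iff.mp h)
    have h1 : G.dist u v ≠ 1 := fun h => hadj (dist_eq_one_iff_adj.mp h)
    omega

lemma Connected.closerSet_eq_of_dist_le_two (hG : G.Connected) (hdiam : ∀ u v, G.dist u v ≤ 2)
    {u v : V} (hne : u ≠ v) (hadj : ¬G.Adj u v) :
    closerSet G u v = insert u (G.neighborSet u \ G.neighborSet v) := by
  ext x
  simp only [closerSet, Set.mem_ofPred_eq, hG.dist_eq_ite_of_dist_le_two hdiam, Set.mem_insert_iff,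
    Set.mem_sdiff, mem_neighborSet]
  split_ifs <;> simp_all [adj_comm]

theorem Connected.isDistBalanced_two_iff_of_dist_le_two [Finite V] (hG : G.Connected)
    (hdiam : ∀ u v, G.dist u v ≤ 2) : IsDistBalanced G 2 ↔ G.IsLocallyRegular := by
  have hdist_two : ∀ u v, G.dist u v = 2 ↔ u ≠ v ∧ ¬G.Adj u v := fun u v => by
    rw [hG.dist_eq_ite_of_dist_le_two hdiam]
    split_ifs <;> simp_all
  have hcard : ∀ {u v}, u ≠ v → ¬G.Adj u v →
      (closerSet G u v).ncard = (G.neighborSet u \ G.neighborSet v).ncard + 1 := fun hne hadj => by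
    rw [hG.closerSet_eq_of_dist_le_two hdiam hne hadj,
      Set.ncard_insert_of_notMem fun h => G.irrefl h.1]
  refine forall₂_congr fun u v => ?_
  rw [hdist_two, and_imp]
  refine imp_congr_right fun hne => imp_congr_right fun hadj => ?_
  rw [hcard hne hadj, hcard hne.symm (hadj ∘ Adj.symm), Nat.add_right_cancel_iff,
    ← Set.ncard_eq_ncard_iff_ncard_sdiff_eq_ncard_sdiff]

end SimpleGraph

section Corona

variable {α β : Type*} {G : SimpleGraph α} {H : SimpleGraph β}

@[simp] lemma corona_adj_none_none {a b : α} :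
    (corona G H).Adj (a, none) (b, none) ↔ G.Adj a b := by
  simp [corona]

@[simp] lemma corona_adj_none_some {a b : α} {h : β} :
    (corona G H).Adj (a, none) (b, some h) ↔ a = b := by
  simp [corona]

@[simp] lemma corona_adj_some_none {a b : α} {h : β} :
    (corona G H).Adj (a, some h) (b, none) ↔ a = b := by
  simp [corona]

@[simp] lemma corona_adj_some_some {a b : α} {h h' : β} :
    (corona G H).Adj (a, some h) (b, some h') ↔ a = b ∧ H.Adj h h' := by
  simp [corona]

lemma corona_adj_fst_eq {x y : α × Option β} (hx : x.2 ≠ none) (hxy : (corona G H).Adj x y) :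
    x.1 = y.1 := by
  obtain ⟨a, _ | h⟩ := x
  · exact absurd rfl hx
  obtain ⟨b, _ | h'⟩ := y <;> simp_all

def coronaBase (G : SimpleGraph α) (H : SimpleGraph β) : G →g corona G H where
  toFun a := (a, none)
  map_rel' := corona_adj_none_none.mpr

lemma corona_dist_base_le_one (x : α × Option β) : (corona G H).dist x (x.1, none) ≤ 1 := by
  obtain ⟨a, _ | h⟩ := x
  · simp
  · exact (dist_eq_one_iff_adj.mpr (corona_adj_some_none.mpr rfl)).le

lemma corona_reachable_base (x : α × Option β) : (corona G H).Reachable x (x.1, none) := by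
  obtain ⟨a, _ | h⟩ := x
  · rfl
  · exact (corona_adj_some_none.mpr rfl).reachable

lemma corona_connected (hG : G.Connected) : (corona G H).Connected :=
  have := hG.nonempty.map fun a => ((a, none) : α × Option β)
  .mk fun x y => (corona_reachable_base x).trans <|
    ((hG x.1 y.1).map (coronaBase G H)).trans (corona_reachable_base y).symm

lemma corona_neighborSet_some (a : α) (h : β) :
    (corona G H).neighborSet (a, some h) =
      insert (a, none) ((fun h' => (a, some h')) '' H.neighborSet h) := by
  ext ⟨b, _ | h'⟩ <;> simp [eq_comm, and_comm]

lemma corona_ncard_neighborSet_some [Finite β] (a : α) (h : β) :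
    ((corona G H).neighborSet (a, some h)).ncard = (H.neighborSet h).ncard + 1 := by
  rw [corona_neighborSet_some, Set.ncard_insert_of_notMem (by simp),
    Set.ncard_image_of_injective _ fun _ _ => by simp]

lemma corona_dist_le_two [Subsingleton α] (x y : α × Option β) : (corona G H).dist x y ≤ 2 := by
  have hbase : ((x.1, none) : α × Option β) = (y.1, none) := by rw [Subsingleton.elim x.1 y.1]
  calc (corona G H).dist x y
        ≤ (corona G H).dist x (x.1, none) + (corona G H).dist (y.1, none) y :=
        hbase ▸ (corona_reachable_base x).dist_triangle_left y
    _ ≤ 1 + 1 := by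
        gcongr
        · exact corona_dist_base_le_one x
        · exact dist_comm.le.trans (corona_dist_base_le_one y)

lemma corona_isLocallyRegular_iff [Subsingleton α] [Nonempty α] [Finite β] :
    (corona G H).IsLocallyRegular ↔ H.IsLocallyRegular := by
  obtain ⟨g⟩ := ‹Nonempty α›
  constructor
  · intro hreg h₁ h₂ hne hadj
    simpa [corona_ncard_neighborSet_some] using
      hreg (g, some h₁) (g, some h₂) (by simpa) (by simpa)
  · rintro hreg ⟨a, _ | h₁⟩ ⟨b, _ | h₂⟩ hne hadj <;> obtain rfl := Subsingleton.elim a b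
    · exact absurd rfl hne
    · exact absurd (corona_adj_none_some.mpr rfl) hadj
    · exact absurd (corona_adj_some_none.mpr rfl) hadj
    · simp only [ne_eq, Prod.mk.injEq, Option.some.injEq, true_and, corona_adj_some_some]
        at hne hadj
      rw [corona_ncard_neighborSet_some, corona_ncard_neighborSet_some, hreg h₁ h₂ hne hadj]

-- A walk leaving the `g`-th copy of `H` has to pass through `(g, none)`.
lemma corona_dist_base_lt_length {g : α} {x y : α × Option β} (p : (corona G H).Walk y x)
    (hy : y.1 = g) (hy' : y.2 ≠ none) (hx : x.1 ≠ g) :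
    (corona G H).dist (g, none) x < p.length := by
  induction p with
  | nil => exact absurd hy hx
  | @cons y z x hyz q ih =>
    have hz : z.1 = g := (corona_adj_fst_eq hy' hyz).symm.trans hy
    rw [Walk.length_cons, Nat.lt_succ_iff]
    obtain ⟨c, _ | h⟩ := z
    · exact hz ▸ dist_le q
    · exact (ih hz (by simp) hx).le

lemma corona_dist_base_lt (hG : G.Connected) {g : α} (h : β) {x : α × Option β} (hx : x.1 ≠ g) :
    (corona G H).dist (g, none) x < (corona G H).dist (g, some h) x := by
  obtain ⟨p, hp⟩ := (corona_connected hG).exists_walk_length_eq_dist (g, some h) x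
  exact hp ▸ corona_dist_base_lt_length p rfl (by simp) hx

variable {g₁ g₂ : α}

lemma corona_dist_some_none_of_adj (hG : G.Connected) (hadj : G.Adj g₁ g₂) (h : β) :
    (corona G H).dist (g₁, some h) (g₂, none) = 2 := by
  have hle : (corona G H).dist (g₁, some h) (g₂, none) ≤ 2 :=
    dist_le (.cons (corona_adj_some_none.mpr rfl) (.cons (corona_adj_none_none.mpr hadj) .nil))
  have hlt := (corona_connected (H := H) hG).one_lt_dist_of_ne_of_not_adj
    (u := (g₁, some h)) (v := (g₂, none)) (by simp) (by simpa using hadj.ne)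
  omega

lemma corona_closerSet_some_none_subset (hG : G.Connected) (hadj : G.Adj g₁ g₂) (h₀ : β) :
    closerSet (corona G H) (g₁, some h₀) (g₂, none) ⊆ Set.range fun h => (g₁, some h) := by
  rintro ⟨a, o⟩ hx
  simp only [closerSet, Set.mem_ofPred_eq] at hx
  by_cases ha : a = g₁
  · subst ha
    obtain _ | h := o
    · rw [dist_comm, dist_eq_one_iff_adj.mpr (corona_adj_some_none.mpr rfl),
        dist_eq_one_iff_adj.mpr (corona_adj_none_none.mpr hadj)] at hx
      exact absurd hx (lt_irrefl 1)
    · exact ⟨h, rfl⟩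
  · have hcut := corona_dist_base_lt (H := H) hG h₀ (x := (a, o)) ha
    have htri := (corona_connected (H := H) hG).dist_triangle (u := (g₂, none)) (v := (g₁, none))
      (w := (a, o))
    have hbase : (corona G H).dist (g₂, none) (g₁, none) = 1 :=
      dist_eq_one_iff_adj.mpr (corona_adj_none_none.mpr hadj.symm)
    rw [dist_comm, dist_comm (u := (a, o))] at hx
    omega

lemma corona_insert_range_subset_closerSet (hG : G.Connected) (hadj : G.Adj g₁ g₂) (h₀ : β) :
    insert (g₂, none) (Set.range fun h => (g₂, some h)) ⊆
      closerSet (corona G H) (g₂, none) (g₁, some h₀) := by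
  rintro x (rfl | ⟨h, rfl⟩) <;> simp only [closerSet, Set.mem_ofPred_eq]
  · rw [dist_self, dist_comm, corona_dist_some_none_of_adj hG hadj]
    exact two_pos
  · rw [dist_eq_one_iff_adj.mpr (corona_adj_some_none.mpr rfl)]
    exact (corona_connected hG).one_lt_dist_of_ne_of_not_adj (by simp [hadj.ne.symm])
      (by simp [hadj.ne.symm])

theorem corona_not_isDistBalanced_two [Finite α] [Finite β] (hG : G.Connected)
    (hadj : G.Adj g₁ g₂) (h₀ : β) : ¬IsDistBalanced (corona G H) 2 := by
  intro hbal
  have hbalanced := hbal _ _ (corona_dist_some_none_of_adj hG hadj h₀)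
  have hle := Set.ncard_le_ncard (corona_closerSet_some_none_subset (H := H) hG hadj h₀)
  have hge := Set.ncard_le_ncard (corona_insert_range_subset_closerSet (H := H) hG hadj h₀)
  have hinj (g : α) : Function.Injective fun h : β => ((g, some h) : α × Option β) :=
    fun _ _ => by simp
  rw [Set.ncard_range_of_injective (hinj g₁)] at hle
  rw [Set.ncard_insert_of_notMem (by simp), Set.ncard_range_of_injective (hinj g₂)] at hge
  omega

end Corona

theorem stmt2 {α β : Type*} [Fintype α] [Fintype β]
    (G : SimpleGraph α) (H : SimpleGraph β) (hG : G.Connected)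
    (hH : 2 ≤ Fintype.card β) :
    IsDistBalanced (corona G H) 2 ↔
      (Fintype.card α = 1 ∧
        ∀ h₁ h₂ : β, h₁ ≠ h₂ → ¬H.Adj h₁ h₂ →
          (H.neighborSet h₁).ncard = (H.neighborSet h₂).ncard) := by
  obtain ⟨h₀⟩ : Nonempty β := Fintype.card_pos_iff.mp (by omega)
  have := hG.nonempty
  rcases subsingleton_or_nontrivial α with hα | hα
  · have hcard : Fintype.card α = 1 :=
      (Fintype.card_le_one_iff_subsingleton.mpr hα).antisymm Fintype.card_pos
    rw [(corona_connected hG).isDistBalanced_two_iff_of_dist_le_two corona_dist_le_two,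
      corona_isLocallyRegular_iff]
    exact (and_iff_right hcard).symm
  · obtain ⟨g₂, hadj⟩ := hG.preconnected.exists_adj_of_nontrivial (Classical.arbitrary α)
    simpa [Fintype.one_lt_card.ne'] using corona_not_isDistBalanced_two (H := H) hG hadj h₀
end

section
/- Let v be a universal vertex of a finite connected graph G with diam(G) ≥ 2. Then G is 2-distance-balanced if and only if G − v is locally regular. -/
open SimpleGraph

/-!
In a connected graph of diameter at most `2`, a vertex `x` is closer to `u` than to `w`
(where `d(u, w) = 2`) exactly when `x = u` or `x ∈ N(u) \ N(w)`. Hence `u` and `w` are balanced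
iff `|N(u) \ N(w)| = |N(w) \ N(u)|`, i.e. iff `deg u = deg w`: a graph of diameter `2` is
2-distance-balanced iff it is locally regular. A universal vertex `v` forces diameter `≤ 2`, is
adjacent to every vertex, and never lies at distance `2` from anything, so removing it lowers
every relevant degree by exactly one.
-/

namespace SimpleGraph

variable {V : Type*} {G : SimpleGraph V}

section DiameterTwo

lemma dist_eq_two_iff_of_dist_le_two (hG : G.Connected) (hle : ∀ x y, G.dist x y ≤ 2)
    {u w : V} : G.dist u w = 2 ↔ u ≠ w ∧ ¬G.Adj u w := by
  rw [ne_eq, ← hG.dist_eq_zero_iff, ← dist_eq_one_iff_adj]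
  have := hle u w
  omega

lemma closerSet_eq_insert_neighborSet_diff (hG : G.Connected) (hle : ∀ x y, G.dist x y ≤ 2)
    {u w : V} (huw : G.dist u w = 2) :
    closerSet G u w = insert u (G.neighborSet u \ G.neighborSet w) := by
  ext x
  simp only [closerSet, Set.mem_ofPred_eq, Set.mem_insert_iff, Set.mem_sdiff, mem_neighborSet]
  constructor
  · intro hx
    have hxw := hle x w
    rcases Nat.lt_or_ge (G.dist x u) 1 with h0 | h1
    · exact .inl (hG.dist_eq_zero_iff.mp (by omega))
    · have hxu : G.Adj x u := dist_eq_one_iff_adj.mp (by omega)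
      refine .inr ⟨hxu.symm, fun hwx => ?_⟩
      have := dist_eq_one_iff_adj.mpr hwx.symm
      omega
  · rintro (rfl | ⟨hux, hwx⟩)
    · rw [hG.dist_eq_zero_iff.mpr rfl, huw]
      omega
    · have hnadj := ((dist_eq_two_iff_of_dist_le_two hG hle).mp huw).2
      have hxw : G.dist x w = 2 := (dist_eq_two_iff_of_dist_le_two hG hle).mpr
        ⟨fun h => hnadj (h ▸ hux), fun h => hwx h.symm⟩
      rw [dist_eq_one_iff_adj.mpr hux.symm, hxw]
      omega

lemma ncard_closerSet_eq_ncard_closerSet_iff [Finite V] (hG : G.Connected)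
    (hle : ∀ x y, G.dist x y ≤ 2) {u w : V} (huw : G.dist u w = 2) :
    (closerSet G u w).ncard = (closerSet G w u).ncard ↔
      (G.neighborSet u).ncard = (G.neighborSet w).ncard := by
  rw [closerSet_eq_insert_neighborSet_diff hG hle huw,
    closerSet_eq_insert_neighborSet_diff hG hle (G.dist_comm ▸ huw),
    Set.ncard_insert_of_notMem (fun h => G.irrefl h.1),
    Set.ncard_insert_of_notMem (fun h => G.irrefl h.1), add_left_inj]
  exact (Set.ncard_eq_ncard_iff_ncard_sdiff_eq_ncard_sdiff).symm

theorem isDistBalanced_two_iff [Finite V] (hG : G.Connected) (hle : ∀ x y, G.dist x y ≤ 2) :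
    IsDistBalanced G 2 ↔
      ∀ u w, u ≠ w → ¬G.Adj u w → (G.neighborSet u).ncard = (G.neighborSet w).ncard := by
  refine forall₂_congr fun u w => ?_
  rw [dist_eq_two_iff_of_dist_le_two hG hle, and_imp]
  exact forall₂_congr fun huw hadj => ncard_closerSet_eq_ncard_closerSet_iff hG hle
    ((dist_eq_two_iff_of_dist_le_two hG hle).mpr ⟨huw, hadj⟩)

end DiameterTwo

section UniversalVertex

variable {v : V}

lemma connected_of_forall_adj (hv : ∀ u, u ≠ v → G.Adj v u) : G.Connected := by
  refine (connected_iff_exists_forall_reachable G).mpr ⟨v, fun u => ?_⟩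
  rcases eq_or_ne u v with rfl | h
  · rfl
  · exact (hv u h).reachable

lemma dist_le_one_of_forall_adj (hv : ∀ u, u ≠ v → G.Adj v u) (x : V) : G.dist v x ≤ 1 := by
  by_cases h : x = v
  · simp [h]
  · exact (dist_eq_one_iff_adj.mpr (hv x h)).le

lemma dist_le_two_of_forall_adj (hv : ∀ u, u ≠ v → G.Adj v u) (x y : V) : G.dist x y ≤ 2 :=
  calc G.dist x y ≤ G.dist x v + G.dist v y := (connected_of_forall_adj hv).dist_triangle
    _ = G.dist v x + G.dist v y := by rw [dist_comm]
    _ ≤ 2 := by linarith [dist_le_one_of_forall_adj hv x, dist_le_one_of_forall_adj hv y]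

lemma ne_of_not_adj_of_forall_adj (hv : ∀ u, u ≠ v → G.Adj v u) {u w : V} (huw : u ≠ w)
    (hadj : ¬G.Adj u w) : u ≠ v := by
  rintro rfl
  exact hadj (hv w huw.symm)

lemma ncard_neighborSet_induce_add_one [Finite V] (hv : ∀ u, u ≠ v → G.Adj v u)
    (a : {u : V // u ≠ v}) :
    ((G.induce {u | u ≠ v}).neighborSet a).ncard + 1 = (G.neighborSet a).ncard := by
  have hpre : (G.induce {u | u ≠ v}).neighborSet a = (↑) ⁻¹' (G.neighborSet a \ {v}) := by
    ext ⟨b, hb⟩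
    have hb : b ≠ v := hb
    simp [neighborSet_induce, hb]
  rw [hpre, Set.ncard_preimage_of_injective_subset_range
      Subtype.val_injective (fun x hx => ⟨⟨x, hx.2⟩, rfl⟩),
    Set.ncard_sdiff_singleton_add_one (s := G.neighborSet a) (hv a a.2).symm]

end UniversalVertex

end SimpleGraph

theorem stmt3_general {α : Type*} [Fintype α] (G : SimpleGraph α)
    (v : α) (hv : ∀ u, u ≠ v → G.Adj v u) :
    IsDistBalanced G 2 ↔
      ∀ a b : {u : α // u ≠ v}, a ≠ b → ¬(G.induce {u : α | u ≠ v}).Adj a b →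
        ((G.induce {u : α | u ≠ v}).neighborSet a).ncard
          = ((G.induce {u : α | u ≠ v}).neighborSet b).ncard := by
  rw [isDistBalanced_two_iff (connected_of_forall_adj hv) (dist_le_two_of_forall_adj hv)]
  have hdeg := ncard_neighborSet_induce_add_one hv
  constructor
  · intro h a b hab hadj
    have := h a b (Subtype.coe_injective.ne hab) hadj
    have := hdeg a
    have := hdeg b
    omega
  · intro h u w huw hadj
    have hu := ne_of_not_adj_of_forall_adj hv huw hadj
    have hw := ne_of_not_adj_of_forall_adj hv huw.symm (fun h => hadj h.symm)
    have := h ⟨u, hu⟩ ⟨w, hw⟩ (fun h => huw (congrArg Subtype.val h)) hadj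
    have : _ + 1 = (G.neighborSet u).ncard := hdeg ⟨u, hu⟩
    have : _ + 1 = (G.neighborSet w).ncard := hdeg ⟨w, hw⟩
    omega

theorem stmt3 {α : Type*} [Fintype α] (G : SimpleGraph α) (hG : G.Connected)
    (hdiam : 2 ≤ G.diam) (v : α) (hv : ∀ u, u ≠ v → G.Adj v u) :
    IsDistBalanced G 2 ↔
      ∀ a b : {u : α // u ≠ v}, a ≠ b → ¬(G.induce {u : α | u ≠ v}).Adj a b →
        ((G.induce {u : α | u ≠ v}).neighborSet a).ncard
          = ((G.induce {u : α | u ≠ v}).neighborSet b).ncard :=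
  stmt3_general G v hv
end

section
/- Let n ≥ 2 and let x = (g₁,h₁), y = (g₂,h₂) be vertices of Γ = Kₙ □ H with g₁ ≠ g₂. Then for a vertex z = (g,h) of Γ: if g = g₁, then z ∈ W_{xy} iff d_H(h,h₁) ≤ d_H(h,h₂); if g = g₂, then z ∈ W_{xy} iff d_H(h,h₁) < d_H(h,h₂) and d_H(h₁,h) ≠ d_H(h₂,h) − 1; and if g ∉ {g₁,g₂}, then z ∈ W_{xy} iff d_H(h,h₁) < d_H(h,h₂). -/
open SimpleGraph

namespace SimpleGraph

variable {α β : Type*} {G : SimpleGraph α} {H : SimpleGraph β}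

lemma dist_boxProd_of_reachable {x y : α × β} (hG : G.Reachable x.1 y.1)
    (hH : H.Reachable x.2 y.2) :
    (G □ H).dist x y = G.dist x.1 y.1 + H.dist x.2 y.2 := by
  rw [dist, edist_boxProd, ENat.toNat_add (edist_ne_top_iff_reachable.mpr hG)
    (edist_ne_top_iff_reachable.mpr hH)]
  rfl

lemma mem_closerSet_boxProd (hG : G.Connected) (hH : H.Connected) (a a₁ a₂ : α) (b b₁ b₂ : β) :
    (a, b) ∈ closerSet (G □ H) (a₁, b₁) (a₂, b₂) ↔
      G.dist a a₁ + H.dist b b₁ < G.dist a a₂ + H.dist b b₂ := by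
  simp only [closerSet, Set.mem_ofPred_eq,
    dist_boxProd_of_reachable (hG.preconnected _ _) (hH.preconnected _ _)]

end SimpleGraph

theorem stmt9_general {β : Type*} (H : SimpleGraph β) (hH : H.Connected)
    (n : ℕ) (g₁ g₂ : Fin n) (h₁ h₂ : β) (hg : g₁ ≠ g₂)
    (g : Fin n) (h : β) :
    (g = g₁ →
      ((g, h) ∈ closerSet ((⊤ : SimpleGraph (Fin n)) □ H) (g₁, h₁) (g₂, h₂) ↔
        H.dist h h₁ ≤ H.dist h h₂)) ∧
    (g = g₂ →
      ((g, h) ∈ closerSet ((⊤ : SimpleGraph (Fin n)) □ H) (g₁, h₁) (g₂, h₂) ↔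
        H.dist h h₁ < H.dist h h₂ ∧ H.dist h₁ h ≠ H.dist h₂ h - 1)) ∧
    (g ≠ g₁ → g ≠ g₂ →
      ((g, h) ∈ closerSet ((⊤ : SimpleGraph (Fin n)) □ H) (g₁, h₁) (g₂, h₂) ↔
        H.dist h h₁ < H.dist h h₂)) := by
  have : Nonempty (Fin n) := ⟨g⟩
  rw [mem_closerSet_boxProd connected_top hH, dist_top, dist_top,
    dist_comm (u := h₁), dist_comm (u := h₂)]
  refine ⟨?_, ?_, ?_⟩
  · rintro rfl
    simp only [↓reduceIte, hg]
    omega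
  · rintro rfl
    simp only [↓reduceIte, hg.symm]
    omega
  · intro hg₁ hg₂
    simp only [↓reduceIte, hg₁, hg₂]
    omega

theorem stmt9 {β : Type*} [Fintype β] (H : SimpleGraph β) (hH : H.Connected)
    (n : ℕ) (hn : 2 ≤ n) (g₁ g₂ : Fin n) (h₁ h₂ : β) (hg : g₁ ≠ g₂)
    (g : Fin n) (h : β) :
    (g = g₁ →
      ((g, h) ∈ closerSet ((⊤ : SimpleGraph (Fin n)) □ H) (g₁, h₁) (g₂, h₂) ↔
        H.dist h h₁ ≤ H.dist h h₂)) ∧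
    (g = g₂ →
      ((g, h) ∈ closerSet ((⊤ : SimpleGraph (Fin n)) □ H) (g₁, h₁) (g₂, h₂) ↔
        H.dist h h₁ < H.dist h h₂ ∧ H.dist h₁ h ≠ H.dist h₂ h - 1)) ∧
    (g ≠ g₁ → g ≠ g₂ →
      ((g, h) ∈ closerSet ((⊤ : SimpleGraph (Fin n)) □ H) (g₁, h₁) (g₂, h₂) ↔
        H.dist h h₁ < H.dist h h₂)) :=
  stmt9_general H hH n g₁ g₂ h₁ h₂ hg g h
end

section
/- Let n ≥ 2, ℓ ≥ 2, and let H be a finite connected graph of diameter at least ℓ which is both ℓ-distance-balanced and (ℓ−1)-distance-balanced. Then Kₙ □ H is ℓ-distance-balanced if and only if for every h₁, h₂ ∈ V(H) with d_H(h₁,h₂) = ℓ−1, |{h ∈ W_{h₁h₂} : d(h₁,h) = d(h₂,h) − 1}| = |{h ∈ W_{h₂h₁} : d(h₂,h) = d(h₁,h) − 1}|. -/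
open SimpleGraph

/-!
In `Kₙ □ H` the distance is `[g ≠ g'] + d_H(h, h')`. For two vertices in the same `H`-layer
the set `W_{uv}` is `Kₙ × W_{h₁h₂}`, so `ℓ`-balance of `H` settles those pairs. For
`u = (g₁, h₁)`, `v = (g₂, h₂)` with `g₁ ≠ g₂` we need `d_H(h₁, h₂) = ℓ - 1`; sorting the vertices
`(g, h)` of `W_{uv}` by their first coordinate gives
`|W_{uv}| + |A₁₂| = n |W_{h₁h₂}| + |E|`, where `A₁₂ = {h : d(h, h₁) + 1 = d(h, h₂)}` and
`E = {h : d(h, h₁) = d(h, h₂)}`. Since `E` is symmetric and `(ℓ - 1)`-balance of `H` makes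
`|W_{h₁h₂}| = |W_{h₂h₁}|`, the pair `u, v` is balanced exactly when `|A₁₂| = |A₂₁|`.
-/

namespace SimpleGraph

variable {α β : Type*}

lemma dist_boxProd {G : SimpleGraph α} {H : SimpleGraph β} {x y : α × β}
    (hG : G.Reachable x.1 y.1) (hH : H.Reachable x.2 y.2) :
    (G □ H).dist x y = G.dist x.1 y.1 + H.dist x.2 y.2 := by
  have hGH : (G □ H).Reachable x y := reachable_boxProd.2 ⟨hG, hH⟩
  have h := hGH.coe_dist_eq_edist.trans (edist_boxProd x y)
  rw [← hG.coe_dist_eq_edist, ← hH.coe_dist_eq_edist] at h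
  exact_mod_cast h

lemma dist_top_boxProd [DecidableEq α] {H : SimpleGraph β} (hH : H.Connected)
    (g₁ g₂ : α) (h₁ h₂ : β) :
    ((⊤ : SimpleGraph α) □ H).dist (g₁, h₁) (g₂, h₂) =
      (if g₁ = g₂ then 0 else 1) + H.dist h₁ h₂ := by
  have : Nonempty α := ⟨g₁⟩
  rw [dist_boxProd (connected_top.preconnected g₁ g₂) (hH.preconnected h₁ h₂), dist_top]

end SimpleGraph

section CompleteBoxProd

variable {α β : Type*} [DecidableEq α] {H : SimpleGraph β}

lemma closerSet_top_boxProd_of_fst_eq (hH : H.Connected) (g : α) (h₁ h₂ : β) :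
    closerSet ((⊤ : SimpleGraph α) □ H) (g, h₁) (g, h₂) = Set.univ ×ˢ closerSet H h₁ h₂ := by
  ext ⟨g', h⟩
  by_cases e : g' = g <;> simp [closerSet, dist_top_boxProd hH, e]

variable [Fintype α] [Fintype β]

lemma ncard_closerSet_top_boxProd_add (hH : H.Connected) {g₁ g₂ : α} (hg : g₁ ≠ g₂)
    (h₁ h₂ : β) :
    (closerSet ((⊤ : SimpleGraph α) □ H) (g₁, h₁) (g₂, h₂)).ncard
        + {h | H.dist h h₁ + 1 = H.dist h h₂}.ncard
      = Fintype.card α * (closerSet H h₁ h₂).ncard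
        + {h | H.dist h h₁ = H.dist h h₂}.ncard := by
  have hunion : closerSet ((⊤ : SimpleGraph α) □ H) (g₁, h₁) (g₂, h₂)
        ∪ {g₂} ×ˢ {h | H.dist h h₁ + 1 = H.dist h h₂}
      = Set.univ ×ˢ closerSet H h₁ h₂ ∪ {g₁} ×ˢ {h | H.dist h h₁ = H.dist h h₂} := by
    ext ⟨g, h⟩
    simp only [closerSet, Set.mem_union, Set.mem_ofPred_eq, Set.mem_prod, Set.mem_singleton_iff,
      Set.mem_univ, true_and, dist_top_boxProd hH]
    by_cases e₁ : g = g₁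
    · subst e₁; simp only [↓reduceIte, zero_add, hg, false_and, or_false, true_and]; omega
    by_cases e₂ : g = g₂
    · subst e₂; simp only [e₁, ↓reduceIte, zero_add, true_and, false_and, or_false]; omega
    · simp [e₁, e₂]
  have hdisj₁ : Disjoint (closerSet ((⊤ : SimpleGraph α) □ H) (g₁, h₁) (g₂, h₂))
      ({g₂} ×ˢ {h | H.dist h h₁ + 1 = H.dist h h₂}) := by
    rw [Set.disjoint_left]
    rintro ⟨g, h⟩ hW ⟨rfl, hA⟩
    simp only [closerSet, Set.mem_ofPred_eq, dist_top_boxProd hH, if_neg hg.symm,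
      ↓reduceIte] at hW hA
    omega
  have hdisj₂ : Disjoint (Set.univ ×ˢ closerSet H h₁ h₂)
      ({g₁} ×ˢ {h | H.dist h h₁ = H.dist h h₂}) := by
    rw [Set.disjoint_left]
    rintro ⟨g, h⟩ ⟨-, hW⟩ ⟨-, hE⟩
    simp only [closerSet, Set.mem_ofPred_eq] at hW hE
    omega
  have h := congrArg Set.ncard hunion
  rwa [Set.ncard_union_eq hdisj₁, Set.ncard_union_eq hdisj₂, Set.ncard_prod, Set.ncard_prod,
    Set.ncard_prod, Set.ncard_singleton, Set.ncard_singleton, Set.ncard_univ,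
    Nat.card_eq_fintype_card, one_mul, one_mul] at h

lemma ncard_closerSet_top_boxProd_eq_iff (hH : H.Connected) {g₁ g₂ : α} (hg : g₁ ≠ g₂)
    {h₁ h₂ : β} (hW : (closerSet H h₁ h₂).ncard = (closerSet H h₂ h₁).ncard) :
    (closerSet ((⊤ : SimpleGraph α) □ H) (g₁, h₁) (g₂, h₂)).ncard
        = (closerSet ((⊤ : SimpleGraph α) □ H) (g₂, h₂) (g₁, h₁)).ncard ↔
      {h | H.dist h h₁ + 1 = H.dist h h₂}.ncard = {h | H.dist h h₂ + 1 = H.dist h h₁}.ncard := by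
  have h₁₂ := ncard_closerSet_top_boxProd_add hH hg h₁ h₂
  have h₂₁ := ncard_closerSet_top_boxProd_add hH hg.symm h₂ h₁
  have hE : {h | H.dist h h₂ = H.dist h h₁} = {h | H.dist h h₁ = H.dist h h₂} :=
    Set.ext fun _ ↦ eq_comm
  rw [hE, ← hW] at h₂₁
  omega

end CompleteBoxProd

lemma sep_closerSet_dist_eq_dist_sub_one {β : Type*} (H : SimpleGraph β) (h₁ h₂ : β) :
    {h ∈ closerSet H h₁ h₂ | H.dist h₁ h = H.dist h₂ h - 1}
      = {h | H.dist h h₁ + 1 = H.dist h h₂} := by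
  ext h
  simp only [closerSet, Set.mem_ofPred_eq, dist_comm (u := h)]
  omega

theorem stmt10_general {β : Type*} [Fintype β] (H : SimpleGraph β) (hH : H.Connected)
    (n ℓ : ℕ) (hn : 2 ≤ n) (hℓ : 2 ≤ ℓ)
    (hdb : IsDistBalanced H ℓ) (hdb' : IsDistBalanced H (ℓ - 1)) :
    IsDistBalanced ((⊤ : SimpleGraph (Fin n)) □ H) ℓ ↔
      ∀ h₁ h₂ : β, H.dist h₁ h₂ = ℓ - 1 →
        ({h ∈ closerSet H h₁ h₂ | H.dist h₁ h = H.dist h₂ h - 1}).ncard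
          = ({h ∈ closerSet H h₂ h₁ | H.dist h₂ h = H.dist h₁ h - 1}).ncard := by
  simp only [sep_closerSet_dist_eq_dist_sub_one]
  constructor
  · intro hbal h₁ h₂ hd
    have hg : (⟨0, by omega⟩ : Fin n) ≠ ⟨1, hn⟩ := by simp [Fin.ext_iff]
    refine (ncard_closerSet_top_boxProd_eq_iff hH hg (hdb' h₁ h₂ hd)).1 (hbal _ _ ?_)
    rw [dist_top_boxProd hH, if_neg hg, hd]
    omega
  · rintro hA ⟨g₁, h₁⟩ ⟨g₂, h₂⟩ hd
    rw [dist_top_boxProd hH] at hd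
    by_cases hg : g₁ = g₂
    · subst hg
      rw [closerSet_top_boxProd_of_fst_eq hH, closerSet_top_boxProd_of_fst_eq hH, Set.ncard_prod,
        Set.ncard_prod, hdb h₁ h₂ (by simpa using hd)]
    · have hd' : H.dist h₁ h₂ = ℓ - 1 := by rw [if_neg hg] at hd; omega
      exact (ncard_closerSet_top_boxProd_eq_iff hH hg (hdb' h₁ h₂ hd')).2 (hA h₁ h₂ hd')

theorem stmt10 {β : Type*} [Fintype β] (H : SimpleGraph β) (hH : H.Connected)
    (n ℓ : ℕ) (hn : 2 ≤ n) (hℓ : 2 ≤ ℓ) (hdiam : ℓ ≤ H.diam)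
    (hdb : IsDistBalanced H ℓ) (hdb' : IsDistBalanced H (ℓ - 1)) :
    IsDistBalanced ((⊤ : SimpleGraph (Fin n)) □ H) ℓ ↔
      ∀ h₁ h₂ : β, H.dist h₁ h₂ = ℓ - 1 →
        ({h ∈ closerSet H h₁ h₂ | H.dist h₁ h = H.dist h₂ h - 1}).ncard
          = ({h ∈ closerSet H h₂ h₁ | H.dist h₂ h = H.dist h₁ h - 1}).ncard :=
  stmt10_general H hH n ℓ hn hℓ hdb hdb'
end

section
/- Let n ≥ 2 and let H be a finite connected graph of diameter at least 2. Then Kₙ □ H is 2-distance-balanced if and only if H is both 2-distance-balanced and 1-distance-balanced. -/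
open SimpleGraph

/-!
Distances in `Kₙ □ H` add: `d((a,y),(g,h)) = [a ≠ g] + d_H(y,h)`. So two vertices at distance 2
either share their `Kₙ`-coordinate and are at distance 2 in `H`, or differ in it and are adjacent
in `H`. Write `W(h₁,h₂)` for the vertices of `H` closer to `h₁` than to `h₂`. In the first case
the vertices closer to `(g,h₁)` than to `(g,h₂)` form `Kₙ × W(h₁,h₂)`, of size `n · |W(h₁,h₂)|`.
In the second case they are the `n - 1` layers `a ≠ g₂` over `W(h₁,h₂)` together with the
vertices of layer `g₁` equidistant from `h₁` and `h₂`; the equidistant part is symmetric in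
`h₁, h₂`, so balance of the pair in `Kₙ □ H` is equivalent to balance of `h₁h₂` in `H`.
-/

namespace SimpleGraph

variable {α β : Type*}

lemma dist_boxProd_s12 {G : SimpleGraph α} {H : SimpleGraph β} {a₁ a₂ : α} {b₁ b₂ : β}
    (h₁ : G.Reachable a₁ a₂) (h₂ : H.Reachable b₁ b₂) :
    (G □ H).dist (a₁, b₁) (a₂, b₂) = G.dist a₁ a₂ + H.dist b₁ b₂ := by
  rw [dist, edist_boxProd, ENat.toNat_add (edist_ne_top_iff_reachable.mpr h₁)
    (edist_ne_top_iff_reachable.mpr h₂), dist, dist]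

def equidistSet (G : SimpleGraph α) (u v : α) : Set α :=
  {x | G.dist x u = G.dist x v}

lemma equidistSet_comm (G : SimpleGraph α) (u v : α) : G.equidistSet u v = G.equidistSet v u :=
  Set.ext fun _ => eq_comm

variable {H : SimpleGraph β}

lemma closerSet_boxProd_mk_left {G : SimpleGraph α} (hG : G.Preconnected) (hH : H.Preconnected)
    (g : α) (h₁ h₂ : β) :
    closerSet (G □ H) (g, h₁) (g, h₂) = Set.univ ×ˢ closerSet H h₁ h₂ := by
  ext ⟨a, y⟩
  simp [closerSet, dist_boxProd_s12 (hG a g) (hH y h₁), dist_boxProd_s12 (hG a g) (hH y h₂)]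

lemma ncard_closerSet_boxProd_mk_left {G : SimpleGraph α} (hG : G.Preconnected)
    (hH : H.Preconnected) (g : α) (h₁ h₂ : β) :
    (closerSet (G □ H) (g, h₁) (g, h₂)).ncard = Nat.card α * (closerSet H h₁ h₂).ncard := by
  rw [closerSet_boxProd_mk_left hG hH, Set.ncard_prod, Set.ncard_univ]

lemma closerSet_top_boxProd_of_adj (hH : H.Preconnected) {g₁ g₂ : α} (hg : g₁ ≠ g₂)
    {h₁ h₂ : β} (hadj : H.Adj h₁ h₂) :
    closerSet ((⊤ : SimpleGraph α) □ H) (g₁, h₁) (g₂, h₂) =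
      {g₂}ᶜ ×ˢ closerSet H h₁ h₂ ∪ {g₁} ×ˢ H.equidistSet h₁ h₂ := by
  classical
  ext ⟨a, y⟩
  -- rules out the layer `g₂`
  have htri : H.dist y h₂ ≤ H.dist y h₁ + 1 :=
    dist_eq_one_iff_adj.mpr hadj ▸ hadj.reachable.dist_triangle_right y
  simp only [closerSet, equidistSet, Set.mem_ofPred_eq, Set.mem_union, Set.mem_prod,
    Set.mem_compl_iff, Set.mem_singleton_iff,
    dist_boxProd_s12 reachable_top (hH y h₁), dist_boxProd_s12 reachable_top (hH y h₂), dist_top]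
  split_ifs <;> grind

lemma ncard_closerSet_top_boxProd_of_adj [Finite α] [Finite β] (hH : H.Preconnected)
    {g₁ g₂ : α} (hg : g₁ ≠ g₂) {h₁ h₂ : β} (hadj : H.Adj h₁ h₂) :
    (closerSet ((⊤ : SimpleGraph α) □ H) (g₁, h₁) (g₂, h₂)).ncard =
      (Nat.card α - 1) * (closerSet H h₁ h₂).ncard + (H.equidistSet h₁ h₂).ncard := by
  have hdisj : Disjoint (closerSet H h₁ h₂) (H.equidistSet h₁ h₂) :=
    Set.disjoint_left.mpr fun _ hlt heq => (ne_of_lt hlt) heq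
  rw [closerSet_top_boxProd_of_adj hH hg hadj,
    Set.ncard_union_eq (Set.disjoint_prod.mpr (Or.inr hdisj)), Set.ncard_prod, Set.ncard_prod,
    Set.ncard_compl, Set.ncard_singleton, Set.ncard_singleton, one_mul]

lemma ncard_closerSet_boxProd_mk_left_eq_iff [Finite α] [Nonempty α] {G : SimpleGraph α}
    (hG : G.Preconnected) (hH : H.Preconnected) (g : α) (h₁ h₂ : β) :
    (closerSet (G □ H) (g, h₁) (g, h₂)).ncard = (closerSet (G □ H) (g, h₂) (g, h₁)).ncard ↔
      (closerSet H h₁ h₂).ncard = (closerSet H h₂ h₁).ncard := by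
  rw [ncard_closerSet_boxProd_mk_left hG hH, ncard_closerSet_boxProd_mk_left hG hH]
  exact Nat.mul_right_inj Nat.card_pos.ne'

lemma ncard_closerSet_top_boxProd_of_adj_eq_iff [Finite α] [Finite β]
    (hH : H.Preconnected) {g₁ g₂ : α} (hg : g₁ ≠ g₂) {h₁ h₂ : β} (hadj : H.Adj h₁ h₂) :
    (closerSet ((⊤ : SimpleGraph α) □ H) (g₁, h₁) (g₂, h₂)).ncard =
        (closerSet ((⊤ : SimpleGraph α) □ H) (g₂, h₂) (g₁, h₁)).ncard ↔
      (closerSet H h₁ h₂).ncard = (closerSet H h₂ h₁).ncard := by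
  have : Nontrivial α := nontrivial_of_ne g₁ g₂ hg
  rw [ncard_closerSet_top_boxProd_of_adj hH hg hadj,
    ncard_closerSet_top_boxProd_of_adj hH hg.symm hadj.symm, equidistSet_comm,
    Nat.add_right_cancel_iff]
  exact Nat.mul_right_inj (Nat.sub_ne_zero_of_lt Finite.one_lt_card)

end SimpleGraph

open SimpleGraph

theorem stmt12_general {β : Type*} [Fintype β] (H : SimpleGraph β) (hH : H.Connected)
    (n : ℕ) (hn : 2 ≤ n) :
    IsDistBalanced ((⊤ : SimpleGraph (Fin n)) □ H) 2 ↔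
      (IsDistBalanced H 2 ∧ IsDistBalanced H 1) := by
  have : Nontrivial (Fin n) := Fin.nontrivial_iff_two_le.mpr hn
  have hK : (⊤ : SimpleGraph (Fin n)).Preconnected := fun _ _ => reachable_top
  have hdist (a g : Fin n) (y h : β) : ((⊤ : SimpleGraph (Fin n)) □ H).dist (a, y) (g, h) =
      (⊤ : SimpleGraph (Fin n)).dist a g + H.dist y h :=
    dist_boxProd_s12 reachable_top (hH.preconnected y h)
  constructor
  · intro hbal
    obtain ⟨g₁, g₂, hg⟩ := exists_pair_ne (Fin n)
    refine ⟨fun h₁ h₂ hd => ?_, fun h₁ h₂ hd => ?_⟩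
    · exact (ncard_closerSet_boxProd_mk_left_eq_iff hK hH.preconnected g₁ h₁ h₂).mp
        (hbal _ _ (by rw [hdist, dist_self, hd]))
    · exact (ncard_closerSet_top_boxProd_of_adj_eq_iff hH.preconnected hg
        (dist_eq_one_iff_adj.mp hd)).mp (hbal _ _ (by rw [hdist, dist_top_of_ne hg, hd]))
  · rintro ⟨hbal₂, hbal₁⟩ ⟨g₁, h₁⟩ ⟨g₂, h₂⟩ hd
    rw [hdist] at hd
    rcases eq_or_ne g₁ g₂ with rfl | hg
    · rw [dist_self, zero_add] at hd
      exact (ncard_closerSet_boxProd_mk_left_eq_iff hK hH.preconnected g₁ h₁ h₂).mpr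
        (hbal₂ h₁ h₂ hd)
    · rw [dist_top_of_ne hg] at hd
      have hd₁ : H.dist h₁ h₂ = 1 := by omega
      exact (ncard_closerSet_top_boxProd_of_adj_eq_iff hH.preconnected hg
        (dist_eq_one_iff_adj.mp hd₁)).mpr (hbal₁ h₁ h₂ hd₁)

theorem stmt12 {β : Type*} [Fintype β] (H : SimpleGraph β) (hH : H.Connected)
    (n : ℕ) (hn : 2 ≤ n) (hdiam : 2 ≤ H.diam) :
    IsDistBalanced ((⊤ : SimpleGraph (Fin n)) □ H) 2 ↔
      (IsDistBalanced H 2 ∧ IsDistBalanced H 1) :=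
  stmt12_general H hH n hn
end

section
/- Let G be a finite connected graph of diameter 2. Then G is 2-distance-balanced if and only if deg(a) = deg(b) for every pair of vertices a, b with d(a,b) = 2. -/
/-! In diameter 2 the distance between two vertices is read off from adjacency, so for
`d(u, v) = 2` the vertices strictly closer to `u` than to `v` are `u` itself and the neighbours of
`u` that are not neighbours of `v`: `|W_uv| = 1 + |N(u) \ N(v)|`. Removing the common
neighbourhood from both sides, `|N(u) \ N(v)| = |N(v) \ N(u)|` exactly when `deg u = deg v`. -/

open SimpleGraph

namespace SimpleGraph

variable {V : Type*} {G : SimpleGraph V}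

lemma ediam_le_two_of_diam_eq_two (h : G.diam = 2) : G.ediam ≤ 2 := by
  have hne : G.ediam ≠ ⊤ := ediam_ne_top_of_diam_ne_zero (by omega)
  rw [← ENat.natCast_toNat hne, ← diam, h]
  rfl

lemma dist_le_two_of_ediam_le_two (hG : G.ediam ≤ 2) (x y : V) : G.dist x y ≤ 2 :=
  ENat.toNat_le_of_le_natCast (edist_le_ediam.trans hG)

lemma dist_eq_two_of_ediam_le_two (hG : G.ediam ≤ 2) {x y : V} (hne : x ≠ y)
    (hxy : ¬ G.Adj x y) : G.dist x y = 2 := by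
  have hreach : G.Reachable x y :=
    edist_ne_top_iff_reachable.mp (ne_top_of_le_ne_top (by decide) (edist_le_ediam.trans hG))
  have h0 : G.dist x y ≠ 0 := fun h => hne (hreach.dist_eq_zero_iff.mp h)
  have h1 : G.dist x y ≠ 1 := fun h => hxy (dist_eq_one_iff_adj.mp h)
  have := dist_le_two_of_ediam_le_two hG x y
  omega

lemma closerSet_eq_insert_of_ediam_le_two (hG : G.ediam ≤ 2) {u v : V}
    (huv : G.dist u v = 2) :
    closerSet G u v = insert u (G.neighborSet u \ G.neighborSet v) := by
  have hnadj : ¬ G.Adj u v := fun h => by rw [dist_eq_one_iff_adj.mpr h] at huv; omega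
  ext x
  simp only [closerSet, Set.mem_ofPred_eq, Set.mem_insert_iff, Set.mem_sdiff, mem_neighborSet]
  by_cases hxu : x = u
  · subst hxu
    simp [huv]
  by_cases hux : G.Adj u x
  · have hxv : x ≠ v := by rintro rfl; exact hnadj hux
    rw [dist_eq_one_iff_adj.mpr hux.symm]
    by_cases hvx : G.Adj v x
    · simp [dist_eq_one_iff_adj.mpr hvx.symm, hxu, hvx]
    · simp [dist_eq_two_of_ediam_le_two hG hxv (hvx ∘ G.adj_symm), hxu, hux, hvx]
  · simpa [dist_eq_two_of_ediam_le_two hG hxu (hux ∘ G.adj_symm), hxu, hux]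
      using dist_le_two_of_ediam_le_two hG x v

lemma ncard_closerSet_of_ediam_le_two [Finite V] (hG : G.ediam ≤ 2) {u v : V}
    (huv : G.dist u v = 2) :
    (closerSet G u v).ncard = (G.neighborSet u \ G.neighborSet v).ncard + 1 := by
  rw [closerSet_eq_insert_of_ediam_le_two hG huv, Set.ncard_insert_of_notMem (by simp)]

end SimpleGraph

theorem stmt14_general {V : Type*} [Fintype V] (G : SimpleGraph V)
    (hd : G.diam = 2) :
    IsDistBalanced G 2 ↔
      ∀ a b : V, G.dist a b = 2 →
        (G.neighborSet a).ncard = (G.neighborSet b).ncard := by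
  have hG := ediam_le_two_of_diam_eq_two hd
  refine forall₂_congr fun a b => forall_congr' fun hab => ?_
  rw [ncard_closerSet_of_ediam_le_two hG hab,
    ncard_closerSet_of_ediam_le_two hG (G.dist_comm.trans hab), add_left_inj]
  exact (Set.ncard_eq_ncard_iff_ncard_sdiff_eq_ncard_sdiff).symm

theorem stmt14 {V : Type*} [Fintype V] (G : SimpleGraph V) (hG : G.Connected)
    (hd : G.diam = 2) :
    IsDistBalanced G 2 ↔
      ∀ a b : V, G.dist a b = 2 →
        (G.neighborSet a).ncard = (G.neighborSet b).ncard :=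
  stmt14_general G hd
end
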